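/- For any Z ∈ R^{M×N}, index set Ω, and the singular value thresholding operator D_{τ}, the fixed-point characterization holds: X̂ = D_τ(Z) satisfies Z − X̂ ∈ τ ∂‖X̂‖_*, i.e., Z − X̂ lies in the subdifferential of τ‖·‖_* at X̂. -/

import Mathlib

open Matrix Finset

noncomputable def frobSq {m n : Type*} [Fintype m] [Fintype n] (A : Matrix m n ℝ) : ℝ :=
  ∑ i, ∑ j, (A i j) ^ 2

noncomputable def frobNorm {m n : Type*} [Fintype m] [Fintype n] (A : Matrix m n ℝ) : ℝ :=
  Real.sqrt (frobSq A)

/-- The singular values of `A` (indexed by columns; padded with zeros),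
defined as square roots of the eigenvalues of `Aᵀ * A`. -/
noncomputable def svals {m n : Type*} [Fintype m] [Fintype n] [DecidableEq n]
    (A : Matrix m n ℝ) : n → ℝ :=
  fun j => Real.sqrt (((by simpa only [Matrix.conjTranspose_eq_transpose_of_trivial] using
    Matrix.isHermitian_conjTranspose_mul_self A : (Aᵀ * A).IsHermitian)).eigenvalues j)

/-- Nuclear norm: sum of singular values. -/
noncomputable def nuclearNorm {m n : Type*} [Fintype m] [Fintype n] [DecidableEq n]
    (A : Matrix m n ℝ) : ℝ := ∑ j, svals A j

/-- Singular values sorted in nonincreasing order. -/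
noncomputable def svalsDesc {M N : ℕ} (A : Matrix (Fin M) (Fin N) ℝ) : Fin N → ℝ :=
  fun i => (svals A ∘ Tuple.sort (svals A)) i.rev

/-- Truncated nuclear norm: sum of all but the `θ` largest singular values. -/
noncomputable def tnn {M N : ℕ} (θ : ℕ) (A : Matrix (Fin M) (Fin N) ℝ) : ℝ :=
  ∑ i ∈ Finset.univ.filter (fun i : Fin N => θ ≤ (i : ℕ)), svalsDesc A i

/-- Spectral norm: largest singular value. -/
noncomputable def specNorm {m n : Type*} [Fintype m] [Fintype n] [DecidableEq n]
    (A : Matrix m n ℝ) : ℝ := ⨆ j, svals A j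

/-- Rectangular diagonal matrix. -/
def rdiag {M N : ℕ} (σ : Fin (min M N) → ℝ) : Matrix (Fin M) (Fin N) ℝ :=
  fun i j => if h : (i : ℕ) = (j : ℕ) ∧ (i : ℕ) < min M N then σ ⟨i, h.2⟩ else 0


section AuxSVT

open Polynomial

variable {M N : ℕ}

private lemma aux_conj_mul (U : Matrix (Fin M) (Fin M) ℝ) (V : Matrix (Fin N) (Fin N) ℝ)
    (hU : Uᵀ * U = 1) (A B : Matrix (Fin M) (Fin N) ℝ) :
    (U * A * Vᵀ)ᵀ * (U * B * Vᵀ) = V * (Aᵀ * B) * Vᵀ := by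
  rw [Matrix.transpose_mul, Matrix.transpose_mul, Matrix.transpose_transpose]
  simp only [Matrix.mul_assoc]
  rw [← Matrix.mul_assoc Uᵀ U, hU, Matrix.one_mul]

private lemma aux_trace_conj (U : Matrix (Fin M) (Fin M) ℝ) (V : Matrix (Fin N) (Fin N) ℝ)
    (hU : Uᵀ * U = 1) (hV : Vᵀ * V = 1) (A B : Matrix (Fin M) (Fin N) ℝ) :
    Matrix.trace ((U * A * Vᵀ)ᵀ * (U * B * Vᵀ)) = Matrix.trace (Aᵀ * B) := by
  rw [aux_conj_mul U V hU, Matrix.trace_mul_cycle, hV, Matrix.one_mul]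

private lemma aux_trace_eq_sum (A B : Matrix (Fin M) (Fin N) ℝ) :
    Matrix.trace (Aᵀ * B) = ∑ j, ∑ i, A i j * B i j := by
  simp [Matrix.trace, Matrix.diag, Matrix.mul_apply]

private lemma aux_sum_eq_trace (A B : Matrix (Fin M) (Fin N) ℝ) :
    ∑ i, ∑ j, A i j * B i j = Matrix.trace (Aᵀ * B) := by
  rw [aux_trace_eq_sum, Finset.sum_comm]

private lemma rdiag_apply (a : Fin (min M N) → ℝ) (i : Fin M) (j : Fin N) :
    rdiag a i j
      = if h : (i : ℕ) = (j : ℕ) ∧ (i : ℕ) < min M N then a ⟨(i : ℕ), h.2⟩ else 0 := rfl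

private lemma rdiag_tmul (a b : Fin (min M N) → ℝ) :
    (rdiag (M := M) a)ᵀ * rdiag b =
      Matrix.diagonal (fun j : Fin N =>
        if h : (j : ℕ) < min M N then a ⟨j, h⟩ * b ⟨j, h⟩ else 0) := by
  ext j k
  rw [Matrix.mul_apply]
  by_cases hjk : j = k
  · subst hjk
    rw [Matrix.diagonal_apply_eq]
    by_cases hj : (j : ℕ) < min M N
    · have hjM : (j : ℕ) < M := lt_of_lt_of_le hj (min_le_left M N)
      rw [Finset.sum_eq_single (⟨(j : ℕ), hjM⟩ : Fin M)]
      · have hcond : ((⟨(j : ℕ), hjM⟩ : Fin M) : ℕ) = (j : ℕ)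
            ∧ ((⟨(j : ℕ), hjM⟩ : Fin M) : ℕ) < min M N := ⟨rfl, hj⟩
        rw [Matrix.transpose_apply, rdiag_apply, rdiag_apply, dif_pos hcond, dif_pos hcond,
          dif_pos hj]
      · intro i _ hne
        have hne' : ¬((i : ℕ) = (j : ℕ) ∧ (i : ℕ) < min M N) := by
          rintro ⟨h1, _⟩
          exact hne (Fin.ext h1)
        rw [Matrix.transpose_apply, rdiag_apply, dif_neg hne', zero_mul]
      · intro h; exact absurd (Finset.mem_univ _) h
    · rw [dif_neg hj, Finset.sum_eq_zero]
      intro i _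
      have hne' : ¬((i : ℕ) = (j : ℕ) ∧ (i : ℕ) < min M N) := by
        rintro ⟨h1, h2⟩; exact hj (h1 ▸ h2)
      rw [Matrix.transpose_apply, rdiag_apply, dif_neg hne', zero_mul]
  · rw [Matrix.diagonal_apply_ne _ hjk, Finset.sum_eq_zero]
    intro i _
    by_cases h1 : (i : ℕ) = (j : ℕ) ∧ (i : ℕ) < min M N
    · have h2 : ¬((i : ℕ) = (k : ℕ) ∧ (i : ℕ) < min M N) := by
        rintro ⟨hk, _⟩
        exact hjk (Fin.ext (h1.1.symm.trans hk))
      rw [Matrix.transpose_apply, rdiag_apply a i j, rdiag_apply b i k, dif_neg h2, mul_zero]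
    · rw [Matrix.transpose_apply, rdiag_apply a i j, dif_neg h1, zero_mul]

private lemma aux_sum_dite (c : Fin (min M N) → ℝ) :
    (∑ j : Fin N, if h : (j : ℕ) < min M N then c ⟨j, h⟩ else 0) = ∑ i, c i := by
  have h1 : (∑ j : Fin N, if h : (j : ℕ) < min M N then c ⟨j, h⟩ else 0)
      = ∑ k ∈ Finset.range N, (if h : k < min M N then c ⟨k, h⟩ else 0) :=
    Fin.sum_univ_eq_sum_range (fun k => if h : k < min M N then c ⟨k, h⟩ else 0) N
  have h2 : (∑ i : Fin (min M N), c i)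
      = ∑ k ∈ Finset.range (min M N), (if h : k < min M N then c ⟨k, h⟩ else 0) := by
    rw [← Fin.sum_univ_eq_sum_range (fun k => if h : k < min M N then c ⟨k, h⟩ else 0)
      (min M N)]
    refine Finset.sum_congr rfl (fun i _ => ?_)
    rw [dif_pos i.isLt]
  rw [h1, h2]
  refine (Finset.sum_subset (Finset.range_subset_range.2 (min_le_right M N)) ?_).symm
  intro x _ hx
  rw [dif_neg (by simpa using hx)]

private lemma aux_charpoly_conj {n : ℕ} (P : Matrix (Fin n) (Fin n) ℝ) (hP : Pᵀ * P = 1)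
    (H : Matrix (Fin n) (Fin n) ℝ) :
    (P * H * Pᵀ).charpoly = H.charpoly := by
  have hP' : P * Pᵀ = 1 := mul_eq_one_comm.mp hP
  set C' : ℝ →+* ℝ[X] := (C : ℝ →+* ℝ[X])
  have hmap1 : (P.map C') * (Pᵀ.map C') = 1 := by
    rw [← Matrix.map_mul, hP']
    exact Matrix.map_one _ (map_zero C') (map_one C')
  have key : charmatrix (P * H * Pᵀ) = (P.map C') * charmatrix H * (Pᵀ.map C') := by
    have hcomm : Matrix.scalar (Fin n) (X : ℝ[X]) * (P.map C')
        = (P.map C') * Matrix.scalar (Fin n) (X : ℝ[X]) :=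
      (Matrix.scalar_commute (X : ℝ[X]) (fun r' => mul_comm _ _) (P.map C')).eq
    unfold charmatrix
    rw [Matrix.mul_sub, Matrix.sub_mul]
    congr 1
    · rw [← hcomm, Matrix.mul_assoc, hmap1, Matrix.mul_one]
    · simp only [RingHom.mapMatrix_apply]
      rw [← Matrix.map_mul, ← Matrix.map_mul]
  simp only [Matrix.charpoly]
  rw [key, Matrix.det_mul, Matrix.det_mul,
    mul_comm ((P.map C').det) ((charmatrix H).det), mul_assoc, ← Matrix.det_mul, hmap1,
    Matrix.det_one, mul_one]

private lemma aux_charpoly_diagonal {n : ℕ} (v : Fin n → ℝ) :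
    (Matrix.diagonal v).charpoly = ∏ j, (X - C (v j)) := by
  have h : charmatrix (Matrix.diagonal v)
      = Matrix.diagonal (fun j => (X : ℝ[X]) - C (v j)) := by
    ext i j
    by_cases hij : i = j
    · subst hij
      rw [charmatrix_apply_eq, Matrix.diagonal_apply_eq, Matrix.diagonal_apply_eq]
    · rw [charmatrix_apply_ne _ _ _ hij, Matrix.diagonal_apply_ne _ hij,
        Matrix.diagonal_apply_ne _ hij, map_zero, neg_zero]
  simp only [Matrix.charpoly]
  rw [h, Matrix.det_diagonal]

private lemma aux_eig_sum {n : ℕ} (P : Matrix (Fin n) (Fin n) ℝ) (μ : Fin n → ℝ)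
    (hP : Pᵀ * P = 1) {H : Matrix (Fin n) (Fin n) ℝ} (hH : H.IsHermitian)
    (hHP : H = P * Matrix.diagonal μ * Pᵀ) (f : ℝ → ℝ) :
    ∑ j, f (hH.eigenvalues j) = ∑ j, f (μ j) := by
  set Q : Matrix (Fin n) (Fin n) ℝ := (hH.eigenvectorUnitary : Matrix (Fin n) (Fin n) ℝ) with hQdef
  have hstar : star Q = Qᵀ := by
    rw [Matrix.star_eq_conjTranspose, Matrix.conjTranspose_eq_transpose_of_trivial]
  have hQ : Qᵀ * Q = 1 := by
    have := (Matrix.mem_unitaryGroup_iff').mp hH.eigenvectorUnitary.2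
    rwa [hstar] at this
  have hspec : H = Q * Matrix.diagonal hH.eigenvalues * Qᵀ := by
    have := hH.spectral_theorem
    rw [Unitary.conjStarAlgAut_apply, ← hQdef] at this
    rwa [hstar, RCLike.ofReal_real_eq_id, Function.id_comp] at this
  have h1 : H.charpoly = (Matrix.diagonal hH.eigenvalues).charpoly := by
    conv_lhs => rw [hspec]
    exact aux_charpoly_conj Q hQ _
  have h2 : H.charpoly = (Matrix.diagonal μ).charpoly := by
    rw [hHP]; exact aux_charpoly_conj P hP _
  have h3 : (∏ j, ((X : ℝ[X]) - C (hH.eigenvalues j))) = ∏ j, ((X : ℝ[X]) - C (μ j)) := by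
    rw [← aux_charpoly_diagonal, ← aux_charpoly_diagonal, ← h1, ← h2]
  have e1 : ∀ g : Fin n → ℝ, (∏ j, ((X : ℝ[X]) - C (g j)))
      = ((Finset.univ.val.map g).map (fun a => (X : ℝ[X]) - C a)).prod := by
    intro g
    rw [Finset.prod_eq_multiset_prod, Multiset.map_map]
    rfl
  have h4 : Finset.univ.val.map hH.eigenvalues = Finset.univ.val.map μ := by
    have h5 := congrArg Polynomial.roots h3
    rwa [e1 hH.eigenvalues, e1 μ,
      Polynomial.roots_multiset_prod_X_sub_C, Polynomial.roots_multiset_prod_X_sub_C] at h5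
  calc ∑ j, f (hH.eigenvalues j)
      = ((Finset.univ.val.map hH.eigenvalues).map f).sum := by
        rw [Multiset.map_map]; rfl
    _ = ((Finset.univ.val.map μ).map f).sum := by rw [h4]
    _ = ∑ j, f (μ j) := by rw [Multiset.map_map]; rfl

private lemma aux_nuclear_conj (U : Matrix (Fin M) (Fin M) ℝ) (V : Matrix (Fin N) (Fin N) ℝ)
    (hU : Uᵀ * U = 1) (hV : Vᵀ * V = 1) (a : Fin (min M N) → ℝ) (ha : ∀ i, 0 ≤ a i) :
    nuclearNorm (U * rdiag a * Vᵀ) = ∑ i, a i := by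
  set X : Matrix (Fin M) (Fin N) ℝ := U * rdiag a * Vᵀ with hXdef
  have hconj : Xᴴ * X = V * Matrix.diagonal (fun j : Fin N =>
      if h : (j : ℕ) < min M N then a ⟨j, h⟩ * a ⟨j, h⟩ else 0) * Vᵀ := by
    rw [Matrix.conjTranspose_eq_transpose_of_trivial, hXdef, aux_conj_mul U V hU, rdiag_tmul]
  have h1 : nuclearNorm X
      = ∑ j : Fin N, Real.sqrt ((Matrix.isHermitian_conjTranspose_mul_self X).eigenvalues j) := rfl
  rw [h1, aux_eig_sum V _ hV (Matrix.isHermitian_conjTranspose_mul_self X) hconj Real.sqrt]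
  have h2 : ∀ j : Fin N,
      Real.sqrt (if h : (j : ℕ) < min M N then a ⟨j, h⟩ * a ⟨j, h⟩ else 0)
        = (if h : (j : ℕ) < min M N then a ⟨j, h⟩ else 0) := by
    intro j
    by_cases h : (j : ℕ) < min M N
    · rw [dif_pos h, dif_pos h, Real.sqrt_mul_self (ha _)]
    · rw [dif_neg h, dif_neg h, Real.sqrt_zero]
  rw [Finset.sum_congr rfl (fun j _ => h2 j), aux_sum_dite]

private lemma aux_trace_le (U : Matrix (Fin M) (Fin M) ℝ) (V : Matrix (Fin N) (Fin N) ℝ)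
    (hU : Uᵀ * U = 1) (hV : Vᵀ * V = 1) (τ : ℝ) (hτ : 0 < τ) (c : Fin (min M N) → ℝ)
    (hc0 : ∀ i, 0 ≤ c i) (hcτ : ∀ i, c i ≤ τ) (Y : Matrix (Fin M) (Fin N) ℝ) :
    Matrix.trace ((U * rdiag c * Vᵀ)ᵀ * Y) ≤ τ * nuclearNorm Y := by
  set G : Matrix (Fin M) (Fin N) ℝ := U * rdiag c * Vᵀ with hGdef
  set hW := Matrix.isHermitian_conjTranspose_mul_self Y with hWdef
  set lam := hW.eigenvalues with hlamdef
  set Q : Matrix (Fin N) (Fin N) ℝ := (hW.eigenvectorUnitary : Matrix (Fin N) (Fin N) ℝ)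
    with hQdef
  have hstar : star Q = Qᵀ := by
    rw [Matrix.star_eq_conjTranspose, Matrix.conjTranspose_eq_transpose_of_trivial]
  have hQ : Qᵀ * Q = 1 := by
    have := (Matrix.mem_unitaryGroup_iff').mp hW.eigenvectorUnitary.2
    rwa [hstar] at this
  have hQ' : Q * Qᵀ = 1 := mul_eq_one_comm.mp hQ
  have hV' : V * Vᵀ = 1 := mul_eq_one_comm.mp hV
  have hdiag : Qᵀ * (Yᴴ * Y) * Q = Matrix.diagonal lam := by
    have := hW.conjStarAlgAut_star_eigenvectorUnitary
    rw [Unitary.conjStarAlgAut_apply, Unitary.coe_star, star_star, ← hQdef] at this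
    rwa [hstar, RCLike.ofReal_real_eq_id, Function.id_comp] at this
  have hYcol : ∀ j, (∑ i, (Y * Q) i j ^ 2) = lam j := by
    intro j
    have e1 : (Y * Q)ᵀ * (Y * Q) = Qᵀ * (Yᴴ * Y) * Q := by
      rw [Matrix.conjTranspose_eq_transpose_of_trivial, Matrix.transpose_mul]
      simp only [Matrix.mul_assoc]
    have e2 : ((Y * Q)ᵀ * (Y * Q)) j j = lam j := by
      rw [e1, hdiag, Matrix.diagonal_apply_eq]
    rw [← e2, Matrix.mul_apply]
    exact Finset.sum_congr rfl (fun i _ => by rw [Matrix.transpose_apply, pow_two])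
  have hGG : Gᵀ * G = V * Matrix.diagonal (fun k : Fin N =>
      if h : (k : ℕ) < min M N then c ⟨k, h⟩ * c ⟨k, h⟩ else 0) * Vᵀ := by
    rw [hGdef, aux_conj_mul U V hU, rdiag_tmul]
  have hGcol : ∀ j, (∑ i, (G * Q) i j ^ 2) ≤ τ ^ 2 := by
    intro j
    set R : Matrix (Fin N) (Fin N) ℝ := Vᵀ * Q with hRdef
    have hR : Rᵀ * R = 1 := by
      rw [hRdef, Matrix.transpose_mul, Matrix.transpose_transpose]
      calc Qᵀ * V * (Vᵀ * Q) = Qᵀ * (V * Vᵀ) * Q := by simp only [Matrix.mul_assoc]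
        _ = 1 := by rw [hV', Matrix.mul_one, hQ]
    have e1 : (G * Q)ᵀ * (G * Q) = Rᵀ * Matrix.diagonal (fun k : Fin N =>
        if h : (k : ℕ) < min M N then c ⟨k, h⟩ * c ⟨k, h⟩ else 0) * R := by
      calc (G * Q)ᵀ * (G * Q) = Qᵀ * (Gᵀ * G) * Q := by
            rw [Matrix.transpose_mul G Q]; simp only [Matrix.mul_assoc]
        _ = _ := by
            rw [hGG, hRdef, Matrix.transpose_mul Vᵀ Q, Matrix.transpose_transpose]
            simp only [Matrix.mul_assoc]
    have e2 : (∑ i, (G * Q) i j ^ 2) = ((G * Q)ᵀ * (G * Q)) j j := by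
      rw [Matrix.mul_apply]
      exact (Finset.sum_congr rfl (fun i _ => by rw [Matrix.transpose_apply, pow_two])).symm
    rw [e2, e1]
    have e3 : (Rᵀ * Matrix.diagonal (fun k : Fin N =>
        if h : (k : ℕ) < min M N then c ⟨k, h⟩ * c ⟨k, h⟩ else 0) * R) j j
        = ∑ k : Fin N, (if h : (k : ℕ) < min M N then c ⟨k, h⟩ * c ⟨k, h⟩ else 0)
            * R k j ^ 2 := by
      rw [Matrix.mul_assoc, Matrix.mul_apply]
      refine Finset.sum_congr rfl (fun k _ => ?_)
      rw [Matrix.transpose_apply, Matrix.diagonal_mul, pow_two]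
      ring
    rw [e3]
    have e4 : ∑ k : Fin N, (τ ^ 2) * R k j ^ 2 = τ ^ 2 := by
      rw [← Finset.mul_sum]
      have h5 : (∑ k : Fin N, R k j ^ 2) = (Rᵀ * R) j j := by
        rw [Matrix.mul_apply]
        exact (Finset.sum_congr rfl (fun k _ => by rw [Matrix.transpose_apply, pow_two])).symm
      rw [h5, hR, Matrix.one_apply_eq, mul_one]
    calc ∑ k : Fin N, (if h : (k : ℕ) < min M N then c ⟨k, h⟩ * c ⟨k, h⟩ else 0) * R k j ^ 2
        ≤ ∑ k : Fin N, (τ ^ 2) * R k j ^ 2 := by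
          refine Finset.sum_le_sum (fun k _ => ?_)
          refine mul_le_mul_of_nonneg_right ?_ (sq_nonneg _)
          by_cases h : (k : ℕ) < min M N
          · rw [dif_pos h, pow_two]
            exact mul_le_mul (hcτ _) (hcτ _) (hc0 _) hτ.le
          · rw [dif_neg h]; exact sq_nonneg τ
      _ = τ ^ 2 := e4
  have hlam0 : ∀ j, 0 ≤ lam j := fun j =>
    Matrix.eigenvalues_conjTranspose_mul_self_nonneg Y j
  have htr : Matrix.trace (Gᵀ * Y) = ∑ j, ∑ i, (G * Q) i j * (Y * Q) i j := by
    have e1 : Matrix.trace (Gᵀ * Y) = Matrix.trace ((G * Q)ᵀ * (Y * Q)) := by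
      calc Matrix.trace (Gᵀ * Y) = Matrix.trace (Gᵀ * Y * (Q * Qᵀ)) := by
            rw [hQ', Matrix.mul_one]
        _ = Matrix.trace (Qᵀ * (Gᵀ * Y * Q)) := by
            rw [← Matrix.mul_assoc, Matrix.trace_mul_comm]
        _ = Matrix.trace (Qᵀ * Gᵀ * (Y * Q)) := by simp only [Matrix.mul_assoc]
        _ = Matrix.trace ((G * Q)ᵀ * (Y * Q)) := by rw [Matrix.transpose_mul G Q]
    rw [e1, aux_trace_eq_sum]
  rw [htr]
  have hnuc : τ * nuclearNorm Y = ∑ j, τ * Real.sqrt (lam j) := by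
    rw [← Finset.mul_sum]; rfl
  rw [hnuc]
  refine Finset.sum_le_sum (fun j _ => ?_)
  set S := ∑ i, (G * Q) i j * (Y * Q) i j with hSdef
  have cs := Finset.sum_mul_sq_le_sq_mul_sq Finset.univ
    (fun i => (G * Q) i j) (fun i => (Y * Q) i j)
  have hS2 : S ^ 2 ≤ τ ^ 2 * lam j := by
    refine le_trans cs ?_
    rw [hYcol j]
    exact mul_le_mul_of_nonneg_right (hGcol j) (hlam0 j)
  calc S ≤ |S| := le_abs_self S
    _ = Real.sqrt (S ^ 2) := (Real.sqrt_sq_eq_abs S).symm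
    _ ≤ Real.sqrt (τ ^ 2 * lam j) := Real.sqrt_le_sqrt hS2
    _ = τ * Real.sqrt (lam j) := by
        rw [Real.sqrt_mul (sq_nonneg τ), Real.sqrt_sq hτ.le]

end AuxSVT

/-- fixed-point/optimality characterization of singular value
thresholding: `X̂ = D_τ(Z)` satisfies `Z − X̂ ∈ τ ∂‖X̂‖_*`, i.e. `Z − X̂` is a
subgradient of `τ‖·‖_*` at `X̂`. -/
theorem svt_subgradient_fixed_point {M N : ℕ} (τ : ℝ) (hτ : 0 < τ)
    (Z : Matrix (Fin M) (Fin N) ℝ)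
    (U : Matrix (Fin M) (Fin M) ℝ) (V : Matrix (Fin N) (Fin N) ℝ)
    (σ : Fin (min M N) → ℝ)
    (hU : Uᵀ * U = 1) (hV : Vᵀ * V = 1)
    (hσ0 : ∀ i, 0 ≤ σ i) (hσd : Antitone σ)
    (hZ : Z = U * rdiag σ * Vᵀ) :
    ∀ Y : Matrix (Fin M) (Fin N) ℝ,
      τ * nuclearNorm (U * rdiag (fun i => max (σ i - τ) 0) * Vᵀ) +
          ∑ i, ∑ j,
            (Z - U * rdiag (fun i' => max (σ i' - τ) 0) * Vᵀ) i j *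
              (Y i j - (U * rdiag (fun i' => max (σ i' - τ) 0) * Vᵀ) i j) ≤
        τ * nuclearNorm Y := by
  intro Y
  set d : Fin (min M N) → ℝ := fun i => max (σ i - τ) 0 with hd
  have hd0 : ∀ i, 0 ≤ d i := fun i => le_max_right _ _
  set c : Fin (min M N) → ℝ := fun i => min (σ i) τ with hc
  have hc0 : ∀ i, 0 ≤ c i := fun i => le_min (hσ0 i) hτ.le
  have hcτ : ∀ i, c i ≤ τ := fun i => min_le_right _ _
  set Xh : Matrix (Fin M) (Fin N) ℝ := U * rdiag d * Vᵀ with hXh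
  have hG : Z - Xh = U * rdiag c * Vᵀ := by
    have hrd : rdiag (M := M) σ - rdiag d = rdiag c := by
      ext i j
      simp only [Matrix.sub_apply, rdiag]
      by_cases h : (i : ℕ) = (j : ℕ) ∧ (i : ℕ) < min M N
      · rw [dif_pos h, dif_pos h, dif_pos h]
        simp only [hd, hc]
        rcases le_total (σ ⟨i, h.2⟩) τ with hh | hh
        · rw [max_eq_right (sub_nonpos.mpr hh), min_eq_left hh, sub_zero]
        · rw [max_eq_left (sub_nonneg.mpr hh), min_eq_right hh, sub_sub_cancel]
      · rw [dif_neg h, dif_neg h, dif_neg h, sub_zero]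
    rw [hZ, hXh, ← hrd, Matrix.mul_sub, Matrix.sub_mul]
  have hsum : (∑ i, ∑ j, (Z - Xh) i j * (Y i j - Xh i j))
      = Matrix.trace ((Z - Xh)ᵀ * (Y - Xh)) := by
    simp_rw [← Matrix.sub_apply]
    exact aux_sum_eq_trace _ _
  have htrXh : Matrix.trace ((U * rdiag c * Vᵀ)ᵀ * Xh) = τ * ∑ i, d i := by
    rw [hXh, aux_trace_conj U V hU hV, rdiag_tmul, Matrix.trace_diagonal,
      aux_sum_dite (fun i => c i * d i), Finset.mul_sum]
    refine Finset.sum_congr rfl (fun i _ => ?_)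
    simp only [hc, hd]
    rcases le_total (σ i) τ with hh | hh
    · rw [max_eq_right (sub_nonpos.mpr hh), mul_zero, mul_zero]
    · rw [min_eq_right hh]
  have hnucXh : nuclearNorm Xh = ∑ i, d i := by
    rw [hXh]; exact aux_nuclear_conj U V hU hV d hd0
  have hle := aux_trace_le U V hU hV τ hτ c hc0 hcτ Y
  rw [hsum, hG, Matrix.mul_sub, Matrix.trace_sub, htrXh, hnucXh]
  linarith
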